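/- arXiv:math/9911018 — 2 statements merged into one kernel-verified Lean document; each statement's English description precedes it below -/
import Mathlib

section
/- For a ∈ ℂ*, the kernel of the evaluation morphism ev_a : OA → sl₂, p(t)⊗x ↦ p(a)x, equals the ideal I_{U_a(t)}; moreover the image of ev_a is the one-dimensional span of e+f if a = ±1, and is all of sl₂ if a ≠ ±1. -/
open LaurentPolynomial

noncomputable section

namespace Onsager

attribute [local instance 100] LieRing.ofAssociativeRing

/-- Laurent polynomials over ℂ, i.e. the ring `ℂ[t,t⁻¹]`. -/
abbrev R : Type := LaurentPolynomial ℂ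

/-- The involution `t ↦ t⁻¹` of `ℂ[t,t⁻¹]`. -/
abbrev inv : R ≃ₐ[ℂ] R := LaurentPolynomial.invert

/-- The loop algebra of `gl₂`: 2×2 matrices over `ℂ[t,t⁻¹]`.  The loop algebra
`L(sl₂) = ℂ[t,t⁻¹] ⊗ sl₂` is its Lie subalgebra of traceless matrices. -/
abbrev Loop : Type := Matrix (Fin 2) (Fin 2) R

/-- The standard generator `e` of `sl₂`, viewed inside the loop algebra. -/
def e : Loop := !![0, 1; 0, 0]
/-- The standard generator `f` of `sl₂`. -/
def f : Loop := !![0, 0; 1, 0]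
/-- The standard generator `h` of `sl₂`. -/
def h : Loop := !![1, 0; 0, -1]

/-- The element `p(t)e + q(t)f + r(t)h` of the loop algebra. -/
def elt (p q r : R) : Loop := p • e + q • f + r • h

lemma elt_eq (p q r : R) : elt p q r = !![r, p; q, -r] := by
  ext i j
  fin_cases i <;> fin_cases j <;> simp [elt, e, f, h]

/-- The swap matrix implementing the involution `θ` of `sl₂`. -/
def Sw : Loop := !![0, 1; 1, 0]

/-- The involution `θ̂` of the loop algebra, `θ̂(p(t) ⊗ x) = p(t⁻¹) ⊗ θ(x)`,
where `θ(e) = f`, `θ(f) = e`, `θ(h) = -h`. -/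
def thetaHat (x : Loop) : Loop := Sw * x.map inv * Sw

lemma Sw_mul_Sw : Sw * Sw = 1 := by
  ext i j
  fin_cases i <;> fin_cases j <;>
    simp [Sw, Matrix.mul_apply, Fin.sum_univ_two, Matrix.one_apply]

lemma map_inv_eq (x : Loop) : x.map inv = (AlgEquiv.mapMatrix (R := ℂ) inv) x := rfl

lemma thetaHat_mul (x y : Loop) : thetaHat (x * y) = thetaHat x * thetaHat y := by
  simp only [thetaHat, map_inv_eq, map_mul]
  calc Sw * (inv.mapMatrix x * inv.mapMatrix y) * Sw
      = Sw * inv.mapMatrix x * (Sw * Sw) * (inv.mapMatrix y * Sw) := by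
        rw [Sw_mul_Sw]; noncomm_ring
    _ = Sw * inv.mapMatrix x * Sw * (Sw * (inv.mapMatrix y * Sw)) := by noncomm_ring
    _ = _ := by noncomm_ring

lemma thetaHat_add (x y : Loop) : thetaHat (x + y) = thetaHat x + thetaHat y := by
  simp only [thetaHat, map_inv_eq, map_add, mul_add, add_mul]

lemma thetaHat_sub (x y : Loop) : thetaHat (x - y) = thetaHat x - thetaHat y := by
  simp only [thetaHat, map_inv_eq, map_sub, mul_sub, sub_mul]

lemma thetaHat_smul (c : ℂ) (x : Loop) : thetaHat (c • x) = c • thetaHat x := by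
  simp only [thetaHat, map_inv_eq, map_smul, Matrix.smul_mul, Matrix.mul_smul]

/-- The Onsager algebra, realized as the subalgebra of the loop algebra of `sl₂`
fixed by the involution `θ̂`. -/
def OASub : LieSubalgebra ℂ Loop where
  carrier := {x | thetaHat x = x ∧ Matrix.trace x = 0}
  add_mem' := by
    rintro x y ⟨hx1, hx2⟩ ⟨hy1, hy2⟩
    exact ⟨by rw [thetaHat_add, hx1, hy1], by simp [hx2, hy2]⟩
  zero_mem' := by
    constructor
    · have := thetaHat_smul 0 0
      simpa using this
    · simp
  smul_mem' := by
    rintro c x ⟨hx1, hx2⟩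
    exact ⟨by rw [thetaHat_smul, hx1], by simp [hx2]⟩
  lie_mem' := by
    rintro x y ⟨hx1, hx2⟩ ⟨hy1, hy2⟩
    constructor
    · rw [Ring.lie_def, thetaHat_sub, thetaHat_mul, thetaHat_mul, hx1, hy1]
    · rw [Ring.lie_def]
      simp [Matrix.trace_mul_comm x y]

/-- The Onsager algebra as a type (a Lie algebra over ℂ). -/
abbrev OA : Type := ↥OASub

/-- For a polynomial `P(t)`, the ideal `I_P` of the Onsager algebra consisting of the
elements `p(t)e + p(t⁻¹)f + q(t)h` with `P | p` and `P | q`. -/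
def IP (P : Polynomial ℂ) : LieIdeal ℂ OA where
  carrier := {X | ∀ i j, P.toLaurent ∣ (X : Loop) i j}
  add_mem' := by
    intro x y hx hy i j
    simpa using dvd_add (hx i j) (hy i j)
  zero_mem' := by intro i j; simp
  smul_mem' := by
    intro c x hx i j
    have : ((c • x : OA) : Loop) i j = c • ((x : Loop) i j) := rfl
    rw [this, Algebra.smul_def]
    exact (hx i j).mul_left _
  lie_mem := by
    intro x m hm i j
    have hco : ((⁅x, m⁆ : OA) : Loop) = ⁅(x : Loop), (m : Loop)⁆ := rfl
    rw [hco, Ring.lie_def]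
    have h1 : P.toLaurent ∣ ((x : Loop) * (m : Loop)) i j := by
      rw [Matrix.mul_apply]
      exact Finset.dvd_sum fun k _ => (hm k j).mul_left _
    have h2 : P.toLaurent ∣ ((m : Loop) * (x : Loop)) i j := by
      rw [Matrix.mul_apply]
      exact Finset.dvd_sum fun k _ => (hm i k).mul_right _
    simpa using dvd_sub h1 h2

/-- A nonconstant monic polynomial `P` of degree `d` is *reciprocal* if
`P(t) = ± t^d P(t⁻¹)`. -/
def IsReciprocal (P : Polynomial ℂ) : Prop :=
  P.Monic ∧ 0 < P.natDegree ∧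
    (P.toLaurent = T (P.natDegree : ℤ) * inv P.toLaurent ∨
     P.toLaurent = -(T (P.natDegree : ℤ) * inv P.toLaurent))

/-- The elementary reciprocal polynomial `U_a`. -/
def U (a : ℂ) : Polynomial ℂ :=
  if a = 1 ∨ a = -1 then Polynomial.X - Polynomial.C a
  else Polynomial.X ^ 2 - Polynomial.C (a + a⁻¹) * Polynomial.X + 1

/-- Evaluation of a Laurent polynomial at a nonzero complex number. -/
def evalL (a : ℂ) (p : R) : ℂ := (AddMonoidAlgebra.coeff p).sum fun n c => c * a ^ n

/-- Evaluation `ev_a` of loop-algebra elements at `t = a`. -/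
def ev (a : ℂ) (x : Loop) : Matrix (Fin 2) (Fin 2) ℂ := x.map (evalL a)

/-- The element `A_m = 2t^m e + 2t^{-m} f` of the loop algebra. -/
def AmL (m : ℤ) : Loop := elt (2 * T m) (2 * T (-m)) 0

/-- The element `G_m = (t^m - t^{-m}) h` of the loop algebra. -/
def GmL (m : ℤ) : Loop := elt 0 0 (T m - T (-m))

lemma thetaHat_elt (p q r : R) :
    thetaHat (elt p q r) = elt (inv q) (inv p) (-(inv r)) := by
  rw [elt_eq, elt_eq]
  have hmap : (!![r, p; q, -r] : Loop).map ⇑inv = !![inv r, inv p; inv q, -(inv r)] := by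
    ext i j
    fin_cases i <;> fin_cases j <;> simp [Matrix.map_apply]
  rw [thetaHat, hmap, Sw]
  ext i j
  fin_cases i <;> fin_cases j <;>
    simp [Matrix.mul_apply, Fin.sum_univ_two]

lemma elt_mem (p r : R) (hr : inv r = -r) : elt p (inv p) r ∈ OASub := by
  constructor
  · rw [thetaHat_elt, hr, neg_neg, LaurentPolynomial.involutive_invert p]
  · rw [elt_eq]
    simp [Matrix.trace_fin_two]

/-- `A_m` as an element of the Onsager algebra. -/
def Am (m : ℤ) : OA :=
  ⟨AmL m, by
    have h2 : inv (2 * T m : R) = 2 * T (-m) := by simp [map_ofNat]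
    have hm := elt_mem (2 * T m) 0 (by simp)
    rw [h2] at hm
    exact hm⟩

/-- `G_m` as an element of the Onsager algebra. -/
def Gm (m : ℤ) : OA :=
  ⟨GmL m, by
    have hm := elt_mem 0 (T m - T (-m)) (by simp [neg_sub])
    rw [map_zero] at hm
    exact hm⟩

end Onsager

/-! An element of `OA` is exactly `p e + p(t⁻¹) f + r h` with `r(t⁻¹) = -r(t)`, and
`ev_a(p(t⁻¹)) = p(a⁻¹)`, so `ev_a` only sees the values of `p` and `r` at `a` and `a⁻¹`.
Since `U_a` is the monic polynomial with simple roots exactly `a` and `a⁻¹`, a Laurent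
polynomial is divisible by `U_a` iff it vanishes at `a` and `a⁻¹`; this gives the kernel.
If `a = a⁻¹`, an odd `r` vanishes at `a` and `p`, `p(t⁻¹)` take the same value there, so the
image is the line through `e + f`. Otherwise the values at `a` and `a⁻¹` can be prescribed
independently by linear interpolation in `t`, and `r = c (t - t⁻¹)` realises any value at `a`,
so the image is all of `sl₂`. -/

theorem Units.val_eq_one_or_neg_one_iff_inv_eq_self {K : Type*} [Ring K] [NoZeroDivisors K]
    (a : Kˣ) : ((a : K) = 1 ∨ (a : K) = -1) ↔ a⁻¹ = a := by
  rw [Units.inv_eq_self_iff, Units.val_eq_one, Units.val_eq_neg_one]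

theorem Units.val_sub_val_inv_ne_zero {K : Type*} [Ring K] {x : Kˣ} (hx : x⁻¹ ≠ x) :
    (x : K) - ↑x⁻¹ ≠ 0 :=
  sub_ne_zero.mpr fun h => hx (Units.ext h.symm)

namespace LaurentPolynomial

open Polynomial hiding C

section CommSemiring

variable {R S : Type*} [CommSemiring R] [CommSemiring S] (f : R →+* S)

theorem eval₂_invert (x : Sˣ) (p : R[T;T⁻¹]) : eval₂ f x (invert p) = eval₂ f x⁻¹ p := by
  induction p using LaurentPolynomial.induction_on' with
  | add p q hp hq => simp only [map_add, hp, hq]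
  | C_mul_T n r => simp [zpow_neg]

end CommSemiring

section CommRing

variable {K : Type*} [CommRing K]

theorem toLaurent_X_sub_C_dvd_iff (x : Kˣ) (p : K[T;T⁻¹]) :
    toLaurent (X - Polynomial.C (x : K)) ∣ p ↔ eval₂ (RingHom.id K) x p = 0 := by
  constructor
  · rintro ⟨q, rfl⟩
    simp
  · intro hp
    obtain ⟨n, P, hP⟩ := p.exists_T_pow
    have hroot : P.IsRoot x := by simpa [hp] using congrArg (eval₂ (RingHom.id K) x) hP
    have := map_dvd toLaurent (dvd_iff_isRoot.mpr hroot)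
    rwa [hP, (isUnit_T _).dvd_mul_right] at this

end CommRing

section Field

variable {K : Type*} [Field K]

theorem exists_eval₂_eq_and_eval₂_inv_eq {x : Kˣ} (hx : x⁻¹ ≠ x) (β γ : K) :
    ∃ p : K[T;T⁻¹], eval₂ (RingHom.id K) x p = β ∧ eval₂ (RingHom.id K) x⁻¹ p = γ := by
  have hd := Units.val_sub_val_inv_ne_zero hx
  refine ⟨C ((β - γ) / (x - x⁻¹)) * T 1 + C ((γ * x - β * x⁻¹) / (x - x⁻¹)), ?_, ?_⟩ <;>
    · simp only [map_add, eval₂_C_mul_T, eval₂_C, RingHom.id_apply, zpow_one]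
      field_simp
      ring

theorem exists_invert_eq_neg_and_eval₂_eq {x : Kˣ} (hx : x⁻¹ ≠ x) (α : K) :
    ∃ r : K[T;T⁻¹], invert r = -r ∧ eval₂ (RingHom.id K) x r = α := by
  have hd := Units.val_sub_val_inv_ne_zero hx
  refine ⟨C (α / (x - x⁻¹)) * (T 1 - T (-1)), ?_, ?_⟩
  · simp only [map_mul, map_sub, invert_C, invert_T, neg_neg]
    ring
  · simp only [map_mul, map_sub, eval₂_C, eval₂_T, RingHom.id_apply, zpow_one, zpow_neg_one]
    field_simp

end Field

end LaurentPolynomial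

namespace Onsager

theorem U_eq_mul_of_inv_ne (a : ℂˣ) (ha : a⁻¹ ≠ a) :
    U a = (Polynomial.X - Polynomial.C (a : ℂ)) *
      (Polynomial.X - Polynomial.C ((a⁻¹ : ℂˣ) : ℂ)) := by
  rw [U, if_neg ((Units.val_eq_one_or_neg_one_iff_inv_eq_self a).not.mpr ha)]
  simp only [Units.val_inv_eq_inv_val, map_add, sub_mul, mul_sub, ← map_mul,
    mul_inv_cancel₀ a.ne_zero, map_one]
  ring

theorem toLaurent_U_dvd_iff (a : ℂˣ) (p : R) :
    (U a).toLaurent ∣ p ↔ eval₂ (RingHom.id ℂ) a p = 0 ∧ eval₂ (RingHom.id ℂ) a (inv p) = 0 := by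
  rw [eval₂_invert]
  by_cases ha : a⁻¹ = a
  · rw [U, if_pos ((Units.val_eq_one_or_neg_one_iff_inv_eq_self a).mpr ha), ha, and_self,
      toLaurent_X_sub_C_dvd_iff]
  · have hcop : IsCoprime (Polynomial.X - Polynomial.C (a : ℂ))
        (Polynomial.X - Polynomial.C ((a⁻¹ : ℂˣ) : ℂ)) :=
      Polynomial.isCoprime_X_sub_C_of_isUnit_sub (Units.val_sub_val_inv_ne_zero ha).isUnit
    rw [U_eq_mul_of_inv_ne a ha, map_mul, ← toLaurent_X_sub_C_dvd_iff, ← toLaurent_X_sub_C_dvd_iff]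
    exact ⟨fun h => ⟨dvd_of_mul_right_dvd h, dvd_of_mul_left_dvd h⟩,
      fun h => (hcop.map Polynomial.toLaurent).mul_dvd h.1 h.2⟩

theorem mem_OASub_iff (x : Loop) :
    x ∈ OASub ↔ ∃ p r : R, inv r = -r ∧ x = elt p (inv p) r := by
  constructor
  · rintro ⟨hθ, htr⟩
    have hx : x = elt (x 0 1) (x 1 0) (x 0 0) := by
      rw [elt_eq]
      ext i j
      fin_cases i <;> fin_cases j <;>
        simp [eq_neg_of_add_eq_zero_right (Matrix.trace_fin_two x ▸ htr)]
    rw [hx, thetaHat_elt, elt_eq, elt_eq] at hθ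
    have h00 : -inv (x 0 0) = x 0 0 := by simpa using congrFun (congrFun hθ 0) 0
    have h10 : inv (x 0 1) = x 1 0 := by simpa using congrFun (congrFun hθ 1) 0
    exact ⟨x 0 1, x 0 0, neg_eq_iff_eq_neg.mp h00, h10 ▸ hx⟩
  · rintro ⟨p, r, hr, rfl⟩
    exact elt_mem p r hr

theorem evalL_coe (a : ℂˣ) (p : R) : evalL a p = eval₂ (RingHom.id ℂ) a p := by
  rw [show evalL a p = smeval p a by simp [evalL, smeval_eq_sum, smul_eq_mul]]
  induction p using LaurentPolynomial.induction_on' with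
  | add p q hp hq => rw [smeval_add, map_add, hp, hq]
  | C_mul_T n r => simp

theorem ev_elt (a : ℂˣ) (p q r : R) :
    ev a (elt p q r) = !![eval₂ (RingHom.id ℂ) a r, eval₂ (RingHom.id ℂ) a p;
      eval₂ (RingHom.id ℂ) a q, -eval₂ (RingHom.id ℂ) a r] := by
  rw [elt_eq]
  ext i j
  fin_cases i <;> fin_cases j <;> simp [ev, evalL_coe]

theorem ev_eq_zero_iff_mem_IP (a : ℂˣ) (X : OA) : ev a (X : Loop) = 0 ↔ X ∈ IP (U a) := by
  obtain ⟨p, r, hr, hX⟩ := (mem_OASub_iff X).mp X.2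
  change _ ↔ ∀ i j, _ ∣ (X : Loop) i j
  rw [hX, ev_elt, elt_eq]
  simp only [Fin.forall_fin_two, toLaurent_U_dvd_iff, ← Matrix.ext_iff, Matrix.of_apply,
    Matrix.cons_val', Matrix.cons_val_zero, Matrix.cons_val_one, Matrix.cons_val_fin_one,
    Matrix.zero_apply, hr, map_neg, neg_eq_zero, LaurentPolynomial.involutive_invert p]
  tauto

theorem range_ev (a : ℂˣ) : Set.range (fun X : OA => ev a (X : Loop)) =
    {m | ∃ p r : R, inv r = -r ∧ m = !![eval₂ (RingHom.id ℂ) a r, eval₂ (RingHom.id ℂ) a p;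
      eval₂ (RingHom.id ℂ) a (inv p), -eval₂ (RingHom.id ℂ) a r]} := by
  ext m
  constructor
  · rintro ⟨X, rfl⟩
    obtain ⟨p, r, hr, hX⟩ := (mem_OASub_iff X).mp X.2
    exact ⟨p, r, hr, by simp only [hX, ev_elt]⟩
  · rintro ⟨p, r, hr, rfl⟩
    exact ⟨⟨_, elt_mem p r hr⟩, ev_elt a _ _ _⟩

theorem range_ev_of_inv_eq (a : ℂˣ) (ha : a⁻¹ = a) :
    Set.range (fun X : OA => ev a (X : Loop)) =
      (Submodule.span ℂ {(!![0, 1; 1, 0] : Matrix (Fin 2) (Fin 2) ℂ)} :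
        Submodule ℂ (Matrix (Fin 2) (Fin 2) ℂ)) := by
  ext m
  rw [range_ev, SetLike.mem_coe, Submodule.mem_span_singleton]
  constructor
  · rintro ⟨p, r, hr, rfl⟩
    have hinv (q : R) : eval₂ (RingHom.id ℂ) a (inv q) = eval₂ (RingHom.id ℂ) a q := by
      rw [eval₂_invert, ha]
    have hr0 : eval₂ (RingHom.id ℂ) a r = 0 := by
      simpa [hr, CharZero.neg_eq_self_iff] using hinv r
    refine ⟨eval₂ (RingHom.id ℂ) a p, ?_⟩
    ext i j
    fin_cases i <;> fin_cases j <;> simp [hr0, hinv]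
  · rintro ⟨c, rfl⟩
    refine ⟨C c, 0, by simp, ?_⟩
    ext i j
    fin_cases i <;> fin_cases j <;> simp

theorem range_ev_of_inv_ne (a : ℂˣ) (ha : a⁻¹ ≠ a) :
    Set.range (fun X : OA => ev a (X : Loop)) = {m | Matrix.trace m = 0} := by
  ext m
  rw [range_ev]
  constructor
  · rintro ⟨p, r, -, rfl⟩
    simp [Matrix.trace_fin_two]
  · intro hm
    have h11 : m 1 1 = -m 0 0 :=
      eq_neg_of_add_eq_zero_right (Matrix.trace_fin_two m ▸ hm)
    obtain ⟨p, hp, hp'⟩ := exists_eval₂_eq_and_eval₂_inv_eq ha (m 0 1) (m 1 0)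
    obtain ⟨r, hr, hr'⟩ := exists_invert_eq_neg_and_eval₂_eq ha (m 0 0)
    refine ⟨p, r, hr, ?_⟩
    ext i j
    fin_cases i <;> fin_cases j <;> simp [hp, hp', hr', h11, eval₂_invert]

/-- **Lemma 4 of Date–Roan.**  For `a ∈ ℂ*`, the kernel of the evaluation morphism
`ev_a : OA → sl₂` equals `I_{U_a}`; its image is the line spanned by `e + f` if
`a = ±1`, and is all of `sl₂` (the traceless matrices) otherwise. -/
theorem eval_kernel_and_image (a : ℂ) (ha : a ≠ 0) :
    (∀ X : OA, ev a (X : Loop) = 0 ↔ X ∈ IP (U a)) ∧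
    ((a = 1 ∨ a = -1) →
        Set.range (fun X : OA => ev a (X : Loop)) =
          (Submodule.span ℂ {(!![0, 1; 1, 0] : Matrix (Fin 2) (Fin 2) ℂ)} :
            Submodule ℂ (Matrix (Fin 2) (Fin 2) ℂ))) ∧
    (¬(a = 1 ∨ a = -1) →
        Set.range (fun X : OA => ev a (X : Loop)) =
          {x : Matrix (Fin 2) (Fin 2) ℂ | Matrix.trace x = 0}) := by
  lift a to ℂˣ using ha.isUnit
  rw [Units.val_eq_one_or_neg_one_iff_inv_eq_self]
  exact ⟨ev_eq_zero_iff_mem_IP a, range_ev_of_inv_eq a, range_ev_of_inv_ne a⟩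

end Onsager
end
end

section
/- In OA_L = OA/I_{(t−1)^L}, there exist unique elements X̲_k, Y̲_k (0 ≤ k < L) such that the images of A_m and G_m satisfy π_L(A_m) = Σ_{k=0}^{L−1} C(m,k) X̲_k and π_L(G_m) = Σ_{k=0}^{L−1} (−1)^k C(m,k) Y̲_k for all m ∈ ℤ, where C(m,k) is the binomial coefficient; moreover Y̲_k = ((−1)^k/4)[X̲_k, X̲_0]. -/
open LaurentPolynomial

noncomputable section

namespace Onsager

attribute [local instance 100] LieRing.ofAssociativeRing

/-- The generalized binomial coefficient `C(m,k) = m(m-1)⋯(m-k+1)/k!` for `m ∈ ℤ`. -/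
def zbinom (m : ℤ) (k : ℕ) : ℂ :=
  (∏ i ∈ Finset.range k, ((m : ℂ) - (i : ℂ))) / (k.factorial : ℂ)

/-!
Because `t` is a unit, the binomial series `t ^ m = ∑ₖ C(m, k) (t - 1) ^ k` holds modulo
`(t - 1) ^ L` for every `m ∈ ℤ`: Pascal's rule carries it from `m = 0` to `m ± 1`. Since
`t⁻¹ - 1 = -t⁻¹ (t - 1)` is an associate of `t - 1`, the same truncation applied to the
coefficients of `A_m` and `G_m` writes `π_L(A_m)` and `π_L(G_m)` in terms of
`X_k = 2 (t - 1) ^ k e + 2 (t⁻¹ - 1) ^ k f` and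
`Y_k = (-1) ^ k ((t - 1) ^ k - (t⁻¹ - 1) ^ k) h`.
These are unique because the functions `m ↦ C(m, k)`, `k < L`, are linearly independent, and
the bracket relation is `[p e + p(t⁻¹) f, q e + q(t⁻¹) f] = (p q(t⁻¹) - p(t⁻¹) q) h`.
-/

lemma zbinom_zero_right (m : ℤ) : zbinom m 0 = 1 := by simp [zbinom]

lemma zbinom_succ_succ (m : ℤ) (k : ℕ) :
    zbinom (m + 1) (k + 1) = zbinom m k + zbinom m (k + 1) := by
  have hshift : ∏ i ∈ Finset.range (k + 1), (((m + 1 : ℤ) : ℂ) - i) =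
      (m + 1) * ∏ i ∈ Finset.range k, ((m : ℂ) - i) := by
    rw [Finset.prod_range_succ']
    push_cast
    simp only [add_sub_add_right_eq_sub, sub_zero, mul_comm]
  have hk : (k.factorial : ℂ) ≠ 0 := Nat.cast_ne_zero.2 k.factorial_ne_zero
  have hk1 : (k : ℂ) + 1 ≠ 0 := Nat.cast_add_one_ne_zero k
  unfold zbinom
  rw [hshift, Finset.prod_range_succ, Nat.factorial_succ]
  push_cast
  field_simp
  ring

lemma zbinom_natCast_of_lt {n k : ℕ} (h : n < k) : zbinom n k = 0 := by
  rw [zbinom, Finset.prod_eq_zero (Finset.mem_range.2 h) (by simp), zero_div]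

lemma zbinom_natCast_self (n : ℕ) : zbinom n n = 1 := by
  induction n with
  | zero => exact zbinom_zero_right 0
  | succ n ih =>
    rw [Nat.cast_succ, zbinom_succ_succ, ih, zbinom_natCast_of_lt n.lt_succ_self, add_zero]

/-- Evaluated at `m = 0, …, L - 1`, the coefficients `C(m, k)` form a unitriangular matrix. -/
lemma eq_of_forall_sum_zbinom_smul_eq {M : Type*} [AddCommGroup M] [Module ℂ M] {L : ℕ}
    {v w : Fin L → M}
    (h : ∀ m : ℤ, ∑ k : Fin L, zbinom m k • v k = ∑ k : Fin L, zbinom m k • w k) :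
    v = w := by
  have hsum (m : ℤ) : ∑ k : Fin L, zbinom m k • (v k - w k) = 0 := by
    simp only [smul_sub, Finset.sum_sub_distrib, h m, sub_self]
  suffices H : ∀ n : ℕ, ∀ k : Fin L, (k : ℕ) = n → v k - w k = 0 from
    funext fun k => sub_eq_zero.1 (H k k rfl)
  intro n
  induction n using Nat.strong_induction_on with
  | _ n IH =>
    intro k hk
    have hn := hsum n
    rwa [Fintype.sum_eq_single k, hk, zbinom_natCast_self, one_smul] at hn
    intro j hj
    rcases lt_or_gt_of_ne (fun hjn : (j : ℕ) = n => hj (Fin.ext (hjn.trans hk.symm))) with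
      hlt | hgt
    · rw [IH j hlt j rfl, smul_zero]
    · rw [zbinom_natCast_of_lt hgt, zero_smul]

lemma eq_of_forall_sum_neg_one_pow_mul_zbinom_smul_eq {M : Type*} [AddCommGroup M]
    [Module ℂ M] {L : ℕ} {v w : Fin L → M}
    (h : ∀ m : ℤ, ∑ k : Fin L, ((-1 : ℂ) ^ (k : ℕ) * zbinom m k) • v k =
      ∑ k : Fin L, ((-1 : ℂ) ^ (k : ℕ) * zbinom m k) • w k) : v = w := by
  have hsigned := eq_of_forall_sum_zbinom_smul_eq (v := fun k => (-1 : ℂ) ^ (k : ℕ) • v k)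
    (w := fun k => (-1 : ℂ) ^ (k : ℕ) • w k) fun m => by
      simpa only [smul_smul, mul_comm] using h m
  funext k
  simpa using congrFun hsigned k

section BinomialSeries

variable {A : Type*} [CommRing A] [Algebra ℂ A]

lemma sum_range_zbinom_add_one_smul (s : A) (m : ℤ) (n : ℕ) :
    ∑ k ∈ Finset.range (n + 1), zbinom (m + 1) k • s ^ k =
      (1 + s) * ∑ k ∈ Finset.range (n + 1), zbinom m k • s ^ k -
        zbinom m n • s ^ (n + 1) := by
  induction n with
  | zero => simp [zbinom_zero_right]
  | succ n ih =>
    rw [Finset.sum_range_succ, ih, Finset.sum_range_succ _ (n + 1), zbinom_succ_succ, add_smul]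
    simp only [Algebra.smul_def]
    ring

lemma sub_one_pow_dvd_zpow_sub_sum (u : Aˣ) (L : ℕ) (m : ℤ) :
    ((u : A) - 1) ^ L ∣
      ((u ^ m : Aˣ) : A) - ∑ k ∈ Finset.range L, zbinom m k • ((u : A) - 1) ^ k := by
  obtain _ | n := L
  · rw [pow_zero]; exact one_dvd _
  set s : A := (u : A) - 1
  set D : ℤ → A := fun m =>
    ((u ^ m : Aˣ) : A) - ∑ k ∈ Finset.range (n + 1), zbinom m k • s ^ k
  have hstep (m : ℤ) : D (m + 1) = u * D m + zbinom m n • s ^ (n + 1) := by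
    have hu : (u : A) = 1 + s := by simp [s]
    simp only [D, zpow_add_one, Units.val_mul, sum_range_zbinom_add_one_smul, ← hu]
    ring
  change s ^ (n + 1) ∣ D m
  induction m using Int.induction_on with
  | zero =>
    have h0 (k : ℕ) : zbinom 0 (k + 1) = 0 := by exact_mod_cast zbinom_natCast_of_lt k.succ_pos
    simp [D, Finset.sum_range_succ', zbinom_zero_right, h0]
  | succ i ih =>
    rw [hstep]
    exact dvd_add (dvd_mul_of_dvd_right ih _) (dvd_smul_of_dvd _ dvd_rfl)
  | pred i ih =>
    have h := hstep (-i - 1)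
    rw [sub_add_cancel] at h
    rw [← Units.dvd_mul_left (u := u), eq_sub_of_add_eq h.symm]
    exact dvd_sub ih (dvd_smul_of_dvd _ dvd_rfl)

end BinomialSeries

lemma T_eq_val_zpow (m : ℤ) : (T m : R) = (((isUnit_T 1).unit ^ m : Rˣ) : R) := by
  induction m using Int.induction_on with
  | zero => simp
  | succ i ih => rw [zpow_add_one, Units.val_mul, ← ih, IsUnit.unit_spec, T_add]
  | pred i ih =>
    rw [zpow_sub_one, Units.val_mul, ← ih, T_sub, ← (isUnit_T 1).unit.mul_left_inj,
      Units.inv_mul_cancel_right, IsUnit.unit_spec, mul_assoc, ← T_add]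
    simp

lemma T_one_sub_one_pow_dvd_T_sub_sum (L : ℕ) (m : ℤ) :
    (T 1 - 1 : R) ^ L ∣ T m - ∑ k ∈ Finset.range L, zbinom m k • (T 1 - 1 : R) ^ k := by
  have h := sub_one_pow_dvd_zpow_sub_sum (isUnit_T (R := ℂ) 1).unit L m
  rwa [← T_eq_val_zpow, IsUnit.unit_spec] at h

lemma T_one_sub_one_pow_dvd_invert {L : ℕ} {p : R} (h : (T 1 - 1 : R) ^ L ∣ p) :
    (T 1 - 1 : R) ^ L ∣ inv p := by
  have hinv : inv (T 1 - 1) = -T (-1) * (T 1 - 1) := by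
    rw [map_sub, invert_T, map_one, neg_mul, mul_sub, ← T_add, mul_one]
    norm_num
  have := map_dvd inv h
  rw [map_pow, hinv, mul_pow] at this
  exact dvd_of_mul_left_dvd this

/-- `ofE p = p e + θ̂(p e)`. -/
def ofE : R →ₗ[ℂ] OA where
  toFun p := ⟨elt p (inv p) 0, elt_mem p 0 (by simp)⟩
  map_add' p q := by ext1; simp [elt_eq]
  map_smul' c p := by ext1; simp [elt_eq]

/-- `ofH r = r h + θ̂(r h)`. -/
def ofH : R →ₗ[ℂ] OA where
  toFun r := ⟨elt 0 0 (r - inv r), map_zero inv ▸ elt_mem 0 (r - inv r) (by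
    rw [map_sub, LaurentPolynomial.involutive_invert r, neg_sub])⟩
  map_add' r s := by ext1; simp [elt_eq]; constructor <;> abel
  map_smul' c r := by ext1; simp [elt_eq, smul_sub]

lemma coe_ofE (p : R) : (ofE p : Loop) = !![0, p; inv p, 0] := by
  simp [ofE, elt_eq]

lemma coe_ofH (r : R) : (ofH r : Loop) = !![r - inv r, 0; 0, -(r - inv r)] := by
  simp [ofH, elt_eq]

lemma Am_eq_ofE (m : ℤ) : Am m = ofE (2 * T m) := by
  ext1; simp [Am, AmL, ofE, map_ofNat]

lemma Gm_eq_ofH (m : ℤ) : Gm m = ofH (T m) := by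
  ext1; simp [Gm, GmL, ofH]

lemma lie_ofE_ofE (p q : R) : ⁅ofE p, ofE q⁆ = ofH (p * inv q) := by
  ext1
  rw [LieSubalgebra.coe_bracket, Ring.lie_def, coe_ofE, coe_ofE, coe_ofH, map_mul,
    LaurentPolynomial.involutive_invert q]
  ext i j : 1
  fin_cases i <;> fin_cases j <;> simp [mul_comm]

lemma ofE_mem_IP {P : Polynomial ℂ} {p : R} (h : P.toLaurent ∣ p) (h' : P.toLaurent ∣ inv p) :
    ofE p ∈ IP P := by
  intro i j
  fin_cases i <;> fin_cases j <;> simp [coe_ofE, h, h']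

lemma ofH_mem_IP {P : Polynomial ℂ} {r : R} (h : P.toLaurent ∣ r) (h' : P.toLaurent ∣ inv r) :
    ofH r ∈ IP P := by
  intro i j
  fin_cases i <;> fin_cases j <;> simp [coe_ofH, dvd_sub h h', dvd_sub h' h]

lemma toLaurent_X_sub_one_pow (L : ℕ) :
    ((Polynomial.X - 1 : Polynomial ℂ) ^ L).toLaurent = (T 1 - 1 : R) ^ L := by
  simp

lemma mk_eq_sum_smul_mk_of_sub_mem {K L M ι : Type*} [CommRing K] [LieRing L]
    [LieAlgebra K L] [AddCommGroup M] [Module K M] [LieRingModule L M] [LieModule K L M]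
    [Fintype ι] {N : LieSubmodule K L M} {x : M} {c : ι → K} {y : ι → M}
    (h : x - ∑ i, c i • y i ∈ N) :
    LieSubmodule.Quotient.mk (N := N) x =
      ∑ i, c i • LieSubmodule.Quotient.mk (N := N) (y i) := by
  have h0 := (LieSubmodule.Quotient.mk_eq_zero (N := N)).2 h
  rwa [map_sub, map_sum, sub_eq_zero] at h0

def genX (k : ℕ) : OA := ofE (2 * (T 1 - 1) ^ k)

def genY (k : ℕ) : OA := ofH ((-1 : ℂ) ^ k • (T 1 - 1) ^ k)

lemma four_smul_genY (k : ℕ) :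
    (4 : ℂ) • genY k = (-1 : ℂ) ^ k • ⁅genX k, genX 0⁆ := by
  rw [genX, genX, lie_ofE_ofE, genY, ← map_smul, ← map_smul]
  congr 1
  simp [map_ofNat, Algebra.smul_def]
  ring

lemma Am_sub_sum_genX_mem (L : ℕ) (m : ℤ) :
    Am m - ∑ k : Fin L, zbinom m k • genX k ∈ IP ((Polynomial.X - 1) ^ L) := by
  have hD := dvd_mul_of_dvd_right (T_one_sub_one_pow_dvd_T_sub_sum L m) 2
  have hsum : Am m - ∑ k : Fin L, zbinom m k • genX k =
      ofE (2 * (T m - ∑ k ∈ Finset.range L, zbinom m k • (T 1 - 1 : R) ^ k)) := by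
    rw [Fin.sum_univ_eq_sum_range (fun k => zbinom m k • genX k), Am_eq_ofE]
    simp only [genX, ← map_smul, ← map_sum, ← map_sub, mul_sub, Finset.mul_sum, mul_smul_comm]
  rw [hsum]
  apply ofE_mem_IP <;> rw [toLaurent_X_sub_one_pow]
  exacts [hD, T_one_sub_one_pow_dvd_invert hD]

lemma Gm_sub_sum_genY_mem (L : ℕ) (m : ℤ) :
    Gm m - ∑ k : Fin L, ((-1 : ℂ) ^ (k : ℕ) * zbinom m k) • genY k ∈
      IP ((Polynomial.X - 1) ^ L) := by
  have hD := T_one_sub_one_pow_dvd_T_sub_sum L m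
  have hsign (k : ℕ) :
      ((-1 : ℂ) ^ k * zbinom m k) • genY k = ofH (zbinom m k • (T 1 - 1) ^ k) := by
    rw [genY, ← map_smul, smul_smul, mul_right_comm, ← mul_pow]
    norm_num
  have hsum : Gm m - ∑ k : Fin L, ((-1 : ℂ) ^ (k : ℕ) * zbinom m k) • genY k =
      ofH (T m - ∑ k ∈ Finset.range L, zbinom m k • (T 1 - 1 : R) ^ k) := by
    rw [Fin.sum_univ_eq_sum_range (fun k => ((-1 : ℂ) ^ k * zbinom m k) • genY k), Gm_eq_ofH]
    simp only [hsign, ← map_sum, ← map_sub]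
  rw [hsum]
  apply ofH_mem_IP <;> rw [toLaurent_X_sub_one_pow]
  exacts [hD, T_one_sub_one_pow_dvd_invert hD]

/-- **Lemma 6 of Date–Roan.**  In `OA_L = OA/I_{(t-1)^L}` there are unique elements
`X̲_k, Y̲_k` (`0 ≤ k < L`) with `π_L(A_m) = Σ_k C(m,k) X̲_k` and
`π_L(G_m) = Σ_k (-1)^k C(m,k) Y̲_k` for all `m ∈ ℤ`; moreover
`Y̲_k = ((-1)^k/4)[X̲_k, X̲_0]`. -/
theorem OA_L_generators (L : ℕ) (hL : 0 < L) :
    ∃ Xu Yu : Fin L → (OA ⧸ IP ((Polynomial.X - 1) ^ L)),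
      ((∀ m : ℤ,
          LieSubmodule.Quotient.mk (N := IP ((Polynomial.X - 1) ^ L)) (Am m) =
            ∑ k : Fin L, zbinom m (k : ℕ) • Xu k) ∧
        (∀ m : ℤ,
          LieSubmodule.Quotient.mk (N := IP ((Polynomial.X - 1) ^ L)) (Gm m) =
            ∑ k : Fin L, ((-1 : ℂ) ^ (k : ℕ) * zbinom m (k : ℕ)) • Yu k)) ∧
      (∀ Xu' Yu' : Fin L → (OA ⧸ IP ((Polynomial.X - 1) ^ L)),
        ((∀ m : ℤ,
            LieSubmodule.Quotient.mk (N := IP ((Polynomial.X - 1) ^ L)) (Am m) =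
              ∑ k : Fin L, zbinom m (k : ℕ) • Xu' k) ∧
          (∀ m : ℤ,
            LieSubmodule.Quotient.mk (N := IP ((Polynomial.X - 1) ^ L)) (Gm m) =
              ∑ k : Fin L, ((-1 : ℂ) ^ (k : ℕ) * zbinom m (k : ℕ)) • Yu' k)) →
          Xu' = Xu ∧ Yu' = Yu) ∧
      (∀ k : Fin L, (4 : ℂ) • Yu k = ((-1 : ℂ) ^ (k : ℕ)) • ⁅Xu k, Xu ⟨0, hL⟩⁆) := by
  have hA (m : ℤ) := mk_eq_sum_smul_mk_of_sub_mem (Am_sub_sum_genX_mem L m)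
  have hG (m : ℤ) := mk_eq_sum_smul_mk_of_sub_mem (Gm_sub_sum_genY_mem L m)
  refine ⟨fun k => LieSubmodule.Quotient.mk (genX k),
    fun k => LieSubmodule.Quotient.mk (genY k), ⟨hA, hG⟩, ?_, fun k => ?_⟩
  · rintro Xu' Yu' ⟨hA', hG'⟩
    exact ⟨eq_of_forall_sum_zbinom_smul_eq fun m => (hA' m).symm.trans (hA m),
      eq_of_forall_sum_neg_one_pow_mul_zbinom_smul_eq fun m => (hG' m).symm.trans (hG m)⟩
  · rw [← LieSubmodule.Quotient.mk_bracket, ← Submodule.Quotient.mk_smul,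
      ← Submodule.Quotient.mk_smul, four_smul_genY]

end Onsager
end
end
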